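/- arXiv:2508.06695 — 2 statements merged into one kernel-verified Lean document; each statement's English description precedes it below -/
import Mathlib

section
/- Let S be a commutative ring, σ ∈ Aut(S) of finite order n, τ ∈ Aut(S), k ∈ ℕ, and α ∈ S not a zero divisor. The map G determined by G(c) = τ(c) for c ∈ S and G(t) = α t^k defines a ring homomorphism from S[t;σ] to itself if and only if τστ^{-1} = σ^k. In particular, if τ and σ commute, this holds if and only if k ≡ 1 (mod n). -/
open Finset

noncomputable section

namespace PetitFormal

variable {S : Type*}

/-- Partial norm `N_i^τ(β) = ∏_{j=0}^{i-1} τ^j(β)`. -/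
def pnorm [CommRing S] (τ : RingAut S) (i : ℕ) (β : S) : S :=
  ∏ j ∈ Finset.range i, (τ ^ j) β

/-- Multiplication in the skew polynomial ring `S[t;σ]`, with `t·a = σ(a)·t`,
modelled on finitely supported functions `ℕ →₀ S`. -/
def skewMul [CommRing S] (σ : RingAut S) (x y : ℕ →₀ S) : ℕ →₀ S :=
  x.sum fun i c => y.sum fun j d => Finsupp.single (i + j) (c * (σ ^ i) d)

/-- Embedding of degree `< m` polynomials into `ℕ →₀ S`. -/
def toPoly [CommRing S] {m : ℕ} (x : Fin m → S) : ℕ →₀ S :=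
  ∑ i : Fin m, Finsupp.single (i : ℕ) (x i)

/-- One pass of right division by the monic polynomial `f = t^m - f0(t)`:
`reduceAux σ m f0 K` reduces a skew polynomial supported in `[0, m+K)`
to one supported in `[0, m)`, using `t^{m+j} ≡ ∑_i σ^j(f0 i) t^{j+i}` (mod_r f). -/
def reduceAux [CommRing S] (σ : RingAut S) (m : ℕ) (f0 : Fin m → S) :
    ℕ → (ℕ →₀ S) → (ℕ →₀ S)
  | 0, x => x
  | K + 1, x =>
      reduceAux σ m f0 K
        (x - Finsupp.single (m + K) (x (m + K))
          + ∑ j : Fin m, Finsupp.single (K + (j : ℕ)) (x (m + K) * (σ ^ K) (f0 j)))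

/-- Multiplication in the (generally nonassociative) Petit algebra
`S_f = S[t;σ]/S[t;σ](t^m - f0(t))`: multiply in `S[t;σ]` and reduce by right
division by `f = t^m - f0(t)`. -/
def petitMul [CommRing S] (σ : RingAut S) (m : ℕ) (f0 : Fin m → S)
    (x y : Fin m → S) : Fin m → S :=
  fun d => (reduceAux σ m f0 m (skewMul σ (toPoly x) (toPoly y))) (d : ℕ)

/-- The coefficient vector of the constant `a`, so that `t^m - f0 = t^m - a`. -/
def constF [CommRing S] (m : ℕ) (a : S) : Fin m → S :=
  fun i => if (i : ℕ) = 0 then a else 0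

/-- Multiplication in the Petit algebra `S_a = S[t;σ]/S[t;σ](t^m - a)`. -/
def petitMulC [CommRing S] (σ : RingAut S) (m : ℕ) (a : S) :
    (Fin m → S) → (Fin m → S) → (Fin m → S) :=
  petitMul σ m (constF m a)

/-- The monomial `c t^k` as an element of the Petit algebra (zero if `k ≥ m`). -/
def mono [CommRing S] (m : ℕ) (c : S) (k : ℕ) : Fin m → S :=
  fun i => if (i : ℕ) = k then c else 0

/-- The identity `1 = 1·t^0` of the Petit algebra. -/
def pone [CommRing S] (m : ℕ) : Fin m → S := mono m 1 0

/-- Left-nested power `L(z,s) = z(z(⋯(z)))` (`s` factors) in the Petit algebra. -/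
def lpow [CommRing S] (σ : RingAut S) (m : ℕ) (f0 : Fin m → S) (z : Fin m → S) :
    ℕ → Fin m → S
  | 0 => pone m
  | s + 1 => petitMul σ m f0 z (lpow σ m f0 z s)

/-- `G` is a (unital) ring homomorphism from the Petit algebra `S_f` to `S_g`. -/
def IsPetitHom [CommRing S] (σ : RingAut S) (m : ℕ) (f0 g0 : Fin m → S)
    (G : (Fin m → S) → (Fin m → S)) : Prop :=
  (∀ x y, G (x + y) = G x + G y) ∧
  (∀ x y, G (petitMul σ m f0 x y) = petitMul σ m g0 (G x) (G y)) ∧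
  G (pone m) = pone m

/-- `G` is a (unital) ring endomorphism of the skew polynomial ring `S[t;σ]`. -/
def IsSkewHom [CommRing S] (σ : RingAut S) (G : (ℕ →₀ S) → (ℕ →₀ S)) : Prop :=
  (∀ x y, G (x + y) = G x + G y) ∧
  (∀ x y, G (skewMul σ x y) = skewMul σ (G x) (G y)) ∧
  G (Finsupp.single 0 1) = Finsupp.single 0 1

/-- `G` is a (unital) ring homomorphism from `S[t;σ]` to the Petit algebra `S_g`. -/
def IsSkewToPetitHom [CommRing S] (σ : RingAut S) (m : ℕ) (g0 : Fin m → S)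
    (G : (ℕ →₀ S) → (Fin m → S)) : Prop :=
  (∀ x y, G (x + y) = G x + G y) ∧
  (∀ x y, G (skewMul σ x y) = petitMul σ m g0 (G x) (G y)) ∧
  G (Finsupp.single 0 1) = pone m

/-- The monomial map `G_{τ,α,k}` on `S[t;σ]`:
`∑ a_i t^i ↦ ∑ τ(a_i) (α t^k)^i = ∑ τ(a_i) N_i^{σ^k}(α) t^{ik}`. -/
def skewMonomialMap [CommRing S] (σ τ : RingAut S) (α : S) (k : ℕ)
    (x : ℕ →₀ S) : ℕ →₀ S :=
  x.sum fun i c => Finsupp.single (i * k) (τ c * pnorm (σ ^ k) i α)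

/-- The monomial map `G_{τ,α,k}` from `S[t;σ]` into the Petit algebra `S_g`:
`∑ a_i t^i ↦ ∑ τ(a_i) (α t^k)^i`, powers computed by left nesting. -/
def skewToPetitMonomialMap [CommRing S] (σ τ : RingAut S) (m : ℕ)
    (g0 : Fin m → S) (α : S) (k : ℕ) (x : ℕ →₀ S) : Fin m → S :=
  x.sum fun i c => τ c • lpow σ m g0 (mono m α k) i

/-- The monomial map `G_{τ,α,k}` between Petit algebras of degree `m`:
`∑_{i<m} a_i t^i ↦ ∑_{i<m} τ(a_i) (α t^k)^i`, powers computed by left nesting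
in the codomain `S_g`. -/
def petitMonomialMap [CommRing S] (σ τ : RingAut S) (m : ℕ)
    (g0 : Fin m → S) (α : S) (k : ℕ) (x : Fin m → S) : Fin m → S :=
  ∑ i : Fin m, τ (x i) • lpow σ m g0 (mono m α k) (i : ℕ)

/-- The Hamming weight: the number of nonzero coefficients. -/
def hwt [CommRing S] {m : ℕ} (x : Fin m → S) : ℕ := by
  classical exact (Finset.univ.filter fun i => x i ≠ 0).card

end PetitFormal

open PetitFormal

/-! Writing `G` on monomials, `G(c tⁱ) = τ(c) Nᵢ(α) t^{ik}` with `Nᵢ(α) = α σᵏ(α) ⋯ σ^{(i-1)k}(α)`,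
multiplicativity on `c tⁱ · d tʲ` amounts, via `N_{i+j}(α) = Nᵢ(α) σ^{ik}(Nⱼ(α))`, to
`τ σⁱ = σ^{ik} τ`, which follows from its case `i = 1`, i.e. `τ σ = σᵏ τ`. Conversely,
comparing `G(t · a)` with `G(t) G(a)` gives `τ(σ a) α = α σᵏ(τ a)`, and `α` can be cancelled.
When `τ` and `σ` commute, `τ σ τ⁻¹ = σᵏ` reads `σ = σᵏ`, i.e. `k ≡ 1` modulo the order of `σ`. -/

namespace PetitFormal

variable {S : Type*} [CommRing S]

section SkewMul

variable (σ : RingAut S)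

lemma skewMul_single_single (i j : ℕ) (c d : S) :
    skewMul σ (Finsupp.single i c) (Finsupp.single j d)
      = Finsupp.single (i + j) (c * (σ ^ i) d) := by
  unfold skewMul
  rw [Finsupp.sum_single_index, Finsupp.sum_single_index] <;> simp

lemma skewMul_add_left (x y z : ℕ →₀ S) :
    skewMul σ (x + y) z = skewMul σ x z + skewMul σ y z := by
  unfold skewMul
  rw [Finsupp.sum_add_index'] <;> simp [add_mul, Finsupp.single_add, Finsupp.sum_add]

lemma skewMul_add_right (x y z : ℕ →₀ S) :
    skewMul σ x (y + z) = skewMul σ x y + skewMul σ x z := by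
  unfold skewMul
  rw [← Finsupp.sum_add]
  refine Finsupp.sum_congr fun i _ => ?_
  rw [Finsupp.sum_add_index'] <;> simp [mul_add, Finsupp.single_add]

end SkewMul

lemma pnorm_add (ρ : RingAut S) (i j : ℕ) (β : S) :
    pnorm ρ (i + j) β = pnorm ρ i β * (ρ ^ i) (pnorm ρ j β) := by
  simp only [pnorm, Finset.prod_range_add, map_prod, pow_add, RingAut.mul_apply]

section MonomialMap

variable (σ τ : RingAut S) {α : S} (k : ℕ)

lemma skewMonomialMap_single (i : ℕ) (c : S) :
    skewMonomialMap σ τ α k (Finsupp.single i c)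
      = Finsupp.single (i * k) (τ c * pnorm (σ ^ k) i α) := by
  unfold skewMonomialMap
  rw [Finsupp.sum_single_index]; simp

lemma skewMonomialMap_add (x y : ℕ →₀ S) :
    skewMonomialMap σ τ α k (x + y)
      = skewMonomialMap σ τ α k x + skewMonomialMap σ τ α k y := by
  unfold skewMonomialMap
  rw [Finsupp.sum_add_index'] <;> simp [add_mul, Finsupp.single_add]

lemma skewMonomialMap_skewMul_single_single (h : SemiconjBy τ σ (σ ^ k)) (i j : ℕ) (c d : S) :
    skewMonomialMap σ τ α k (skewMul σ (Finsupp.single i c) (Finsupp.single j d))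
      = skewMul σ (skewMonomialMap σ τ α k (Finsupp.single i c))
          (skewMonomialMap σ τ α k (Finsupp.single j d)) := by
  have hτσi : τ ((σ ^ i) d) = ((σ ^ k) ^ i) (τ d) := DFunLike.congr_fun (h.pow_right i).eq d
  have hσik : σ ^ (i * k) = (σ ^ k) ^ i := by rw [← pow_mul, mul_comm]
  simp only [skewMul_single_single, skewMonomialMap_single, add_mul, pnorm_add, map_mul,
    hτσi, hσik]
  congr 1
  ring

lemma skewMonomialMap_skewMul (h : SemiconjBy τ σ (σ ^ k)) (x y : ℕ →₀ S) :
    skewMonomialMap σ τ α k (skewMul σ x y)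
      = skewMul σ (skewMonomialMap σ τ α k x) (skewMonomialMap σ τ α k y) := by
  induction x using Finsupp.induction_linear with
  | zero => simp [skewMul, skewMonomialMap]
  | add f g hf hg => rw [skewMul_add_left, skewMonomialMap_add, hf, hg, skewMonomialMap_add,
      skewMul_add_left]
  | single i c =>
    induction y using Finsupp.induction_linear with
    | zero => simp [skewMul, skewMonomialMap]
    | add f g hf hg => rw [skewMul_add_right, skewMonomialMap_add, hf, hg, skewMonomialMap_add,
        skewMul_add_right]
    | single j d => exact skewMonomialMap_skewMul_single_single σ τ k h i j c d

lemma semiconjBy_of_skewMonomialMap_skewMul (hα : α ∈ nonZeroDivisors S)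
    (hmul : ∀ x y, skewMonomialMap σ τ α k (skewMul σ x y)
      = skewMul σ (skewMonomialMap σ τ α k x) (skewMonomialMap σ τ α k y)) :
    SemiconjBy τ σ (σ ^ k) := by
  refine RingEquiv.ext fun a => ?_
  change τ (σ a) = (σ ^ k) (τ a)
  have hta := DFunLike.congr_fun (hmul (Finsupp.single 1 1) (Finsupp.single 0 a)) k
  simp only [skewMul_single_single, skewMonomialMap_single, pnorm, Finsupp.single_apply,
    add_zero, one_mul, zero_mul, if_true, Finset.prod_range_one, Finset.range_zero,
    Finset.prod_empty, pow_zero, pow_one, map_one, mul_one, RingAut.one_apply] at hta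
  exact (mul_cancel_right_mem_nonZeroDivisors hα).mp (by rw [hta, mul_comm])

theorem isSkewHom_skewMonomialMap_iff (hα : α ∈ nonZeroDivisors S) :
    IsSkewHom σ (skewMonomialMap σ τ α k) ↔ SemiconjBy τ σ (σ ^ k) := by
  refine ⟨fun hG => semiconjBy_of_skewMonomialMap_skewMul σ τ k hα hG.2.1, fun h => ?_⟩
  refine ⟨skewMonomialMap_add σ τ k, skewMonomialMap_skewMul σ τ k h, ?_⟩
  simp [skewMonomialMap_single, pnorm]

end MonomialMap

end PetitFormal

theorem stmt4_general {S : Type*} [CommRing S] (σ τ : RingAut S) (n : ℕ)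
    (hn : orderOf σ = n) (k : ℕ)
    (α : S) (hα : α ∈ nonZeroDivisors S) :
    (IsSkewHom σ (skewMonomialMap σ τ α k) ↔ τ * σ * τ⁻¹ = σ ^ k) ∧
    ((∀ x, τ (σ x) = σ (τ x)) →
      (IsSkewHom σ (skewMonomialMap σ τ α k) ↔ k ≡ 1 [MOD n])) := by
  have hconj : IsSkewHom σ (skewMonomialMap σ τ α k) ↔ τ * σ * τ⁻¹ = σ ^ k := by
    rw [isSkewHom_skewMonomialMap_iff σ τ k hα, mul_inv_eq_iff_eq_mul]
    rfl
  refine ⟨hconj, fun hcomm => ?_⟩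
  have hτστ : τ * σ * τ⁻¹ = σ := mul_inv_eq_iff_eq_mul.mpr (RingEquiv.ext hcomm)
  rw [hconj, hτστ, eq_comm, ← hn]
  simpa only [pow_one] using pow_eq_pow_iff_modEq (x := σ) (n := k) (m := 1)

/-- Lemma `L:Ktsigmatoitself`: the monomial map `G_{τ,α,k}` is a ring
endomorphism of `S[t;σ]` iff `τστ⁻¹ = σ^k`; if `τ` and `σ` commute, iff
`k ≡ 1 (mod n)` where `n` is the order of `σ`. -/
theorem stmt4 {S : Type*} [CommRing S] (σ τ : RingAut S) (n : ℕ)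
    (hn : orderOf σ = n) (hn0 : 0 < n) (k : ℕ)
    (α : S) (hα : α ∈ nonZeroDivisors S) :
    (IsSkewHom σ (skewMonomialMap σ τ α k) ↔ τ * σ * τ⁻¹ = σ ^ k) ∧
    ((∀ x, τ (σ x) = σ (τ x)) →
      (IsSkewHom σ (skewMonomialMap σ τ α k) ↔ k ≡ 1 [MOD n])) :=
  stmt4_general σ τ n hn k α hα
end
end

section
/- Let S be a commutative ring, σ ∈ Aut(S) of order n, and a, b ∈ S^×. Suppose n ∤ m, or at least one of a, b does not lie in the fixed ring S_0 (i.e., the Petit algebra is proper nonassociative). Then any Hamming-weight-preserving nonzero homomorphism G : S_a → S_b whose restriction to S is an automorphism commuting with σ is monomial of degree one, i.e., G(t) = α t for some non-zero-divisor α ∈ S. -/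
/-!
Weight preservation makes `G t = α t ^ k` and every `G (t ^ i)` a monomial. Since
`t t ^ {m-1} = a` is a unit, so is `α`; and `t c = σ(c) t` forces `σ ^ k = σ`, so `k = 0` would
make `σ` trivial. If `k ≥ 2`, follow `G (t ^ j)` up to the first `j` with `j k ≥ m`: there the
relation `t ^ j c = σ ^ j (c) t ^ j` gives `σ ^ {jk - m} = σ ^ j = σ ^ {jk}`, so `σ ^ m = 1`, and
the commutation of `G (t ^ j)` with `G t` across this wrap gives `σ(b) = b`. Then `S_b` is
associative, so `G` kills the associator `(t ^ {m-1} t) t - t ^ {m-1} (t t) = (a - σ(a)) t` of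
`S_a`, whence `σ(a) = a`: both algebras would be associative.
-/

open Finset

noncomputable section

namespace PetitFormal

variable {S : Type*}

section Monomials

variable [CommRing S]

theorem mono_eq_zero {m k : ℕ} (c : S) (hk : m ≤ k) : mono m c k = 0 := by
  funext i
  simp only [mono, Pi.zero_apply, ite_eq_right_iff]
  omega

theorem mono_congr {m : ℕ} {c c' : S} {w w' : ℕ} (hc : c = c') (hw : w = w') :
    mono m c w = mono m c' w' := by
  rw [hc, hw]

theorem mono_inj {m : ℕ} {c d : S} {w w' : ℕ} (hw : w < m) (hc : c ≠ 0)
    (h : mono m c w = mono m d w') : c = d ∧ w = w' := by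
  have hcoeff := congrFun h ⟨w, hw⟩
  simp only [mono, if_true] at hcoeff
  by_cases hww : w = w'
  · simpa [hww] using hcoeff
  · simp [hww, hc] at hcoeff

theorem mono_left_inj {m : ℕ} {c d : S} {w : ℕ} (hw : w < m) :
    mono m c w = mono m d w ↔ c = d := by
  refine ⟨fun h => ?_, fun h => h ▸ rfl⟩
  simpa [mono] using congrFun h ⟨w, hw⟩

theorem hwt_mono [Nontrivial S] {m : ℕ} {c : S} {w : ℕ} (hw : w < m) (hc : c ≠ 0) :
    hwt (mono m c w) = 1 := by
  rw [hwt, Finset.card_eq_one]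
  refine ⟨⟨w, hw⟩, ?_⟩
  ext i
  by_cases hi : (i : ℕ) = w <;> simp [mono, hi, hc, Fin.ext_iff]

theorem exists_eq_mono_of_hwt_eq_one {m : ℕ} {x : Fin m → S} (hx : hwt x = 1) :
    ∃ c w, c ≠ 0 ∧ w < m ∧ x = mono m c w := by
  classical
  rw [hwt, Finset.card_eq_one] at hx
  obtain ⟨j, hj⟩ := hx
  have hsupp : ∀ i, x i ≠ 0 ↔ i = j := fun i => by
    simpa using Finset.ext_iff.mp hj i
  refine ⟨x j, j, (hsupp j).2 rfl, j.isLt, funext fun i => ?_⟩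
  by_cases hij : i = j
  · simp [mono, hij]
  · simpa [mono, Fin.val_eq_val, hij] using (hsupp i).not.2 hij

theorem toPoly_mono {m : ℕ} (c : S) {u : ℕ} (hu : u < m) :
    toPoly (mono m c u) = Finsupp.single u c := by
  rw [toPoly, Finset.sum_eq_single (⟨u, hu⟩ : Fin m)]
  · simp [mono]
  · intro j _ hj
    simp [mono, Fin.ext_iff.not.mp hj]
  · simp

theorem skewMul_single (σ : RingAut S) (u v : ℕ) (c d : S) :
    skewMul σ (Finsupp.single u c) (Finsupp.single v d)
      = Finsupp.single (u + v) (c * (σ ^ u) d) := by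
  rw [skewMul, Finsupp.sum_single_index (by simp), Finsupp.sum_single_index (by simp)]

theorem reduceAux_eq_self (σ : RingAut S) {m : ℕ} (f0 : Fin m → S) (K : ℕ)
    {x : ℕ →₀ S} (hx : ∀ j, m ≤ j → x j = 0) : reduceAux σ m f0 K x = x := by
  induction K with
  | zero => rfl
  | succ K ih => simpa [reduceAux, hx (m + K) (Nat.le_add_right _ _)] using ih

theorem reduceAux_constF_single (σ : RingAut S) {m : ℕ} (e c : S) {r K : ℕ}
    (hrK : r < K) (hrm : r < m) :
    reduceAux σ m (constF m e) K (Finsupp.single (m + r) c)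
      = Finsupp.single r (c * (σ ^ r) e) := by
  induction K with
  | zero => omega
  | succ K ih =>
    rw [reduceAux]
    rcases Nat.lt_succ_iff_lt_or_eq.mp hrK with h | rfl
    · simpa [Finsupp.single_eq_of_ne' (show m + r ≠ m + K by omega)] using ih h
    · have hsum : ∑ j : Fin m, Finsupp.single (r + (j : ℕ)) (c * (σ ^ r) (constF m e j))
          = Finsupp.single r (c * (σ ^ r) e) := by
        rw [Finset.sum_eq_single (⟨0, by omega⟩ : Fin m)]
        · simp [constF]
        · intro j _ hj
          simp [constF, Fin.ext_iff.not.mp hj]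
        · simp
      rw [Finsupp.single_eq_same, sub_self, zero_add, hsum]
      exact reduceAux_eq_self σ _ r fun j hj =>
        Finsupp.single_apply_eq_zero.mpr fun h => by omega

theorem mono_mul_mono_of_lt (σ : RingAut S) {m : ℕ} (e c d : S) {u v : ℕ}
    (huv : u + v < m) :
    petitMul σ m (constF m e) (mono m c u) (mono m d v) = mono m (c * (σ ^ u) d) (u + v) := by
  funext i
  rw [petitMul, toPoly_mono c (by omega), toPoly_mono d (by omega), skewMul_single,
    reduceAux_eq_self σ _ m fun j hj => Finsupp.single_apply_eq_zero.mpr fun h => by omega]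
  simp only [mono, Finsupp.single_apply]
  exact if_congr eq_comm rfl rfl

theorem mono_mul_mono_of_le (σ : RingAut S) {m : ℕ} (e c d : S) {u v : ℕ}
    (hu : u < m) (hv : v < m) (huv : m ≤ u + v) :
    petitMul σ m (constF m e) (mono m c u) (mono m d v)
      = mono m (c * (σ ^ u) d * (σ ^ (u + v - m)) e) (u + v - m) := by
  obtain ⟨r, hr⟩ := Nat.exists_eq_add_of_le huv
  funext i
  rw [petitMul, toPoly_mono c hu, toPoly_mono d hv, skewMul_single, hr,
    reduceAux_constF_single σ e _ (by omega) (by omega), Nat.add_sub_cancel_left]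
  simp only [mono, Finsupp.single_apply]
  exact if_congr eq_comm rfl rfl

theorem mono_mul_mono (σ : RingAut S) {m : ℕ} (e c d : S) {u v : ℕ} (hu : u < m) (hv : v < m) :
    petitMul σ m (constF m e) (mono m c u) (mono m d v)
      = mono m (c * (σ ^ u) d * if u + v < m then 1 else (σ ^ (u + v - m)) e) ((u + v) % m) := by
  by_cases huv : u + v < m
  · rw [mono_mul_mono_of_lt σ e c d huv, if_pos huv, mul_one, Nat.mod_eq_of_lt huv]
  · rw [mono_mul_mono_of_le σ e c d hu hv (by omega), if_neg huv,
      Nat.mod_eq_sub_mod (by omega), Nat.mod_eq_of_lt (by omega)]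

end Monomials

section MonomialRelations

variable [CommRing S] (σ : RingAut S) {m : ℕ} (e : S)

theorem mono_one_mul_mono_one_comm {i j : ℕ} (hi : i < m) (hj : j < m) :
    petitMul σ m (constF m e) (mono m 1 i) (mono m 1 j)
      = petitMul σ m (constF m e) (mono m 1 j) (mono m 1 i) := by
  rw [mono_mul_mono σ e 1 1 hi hj, mono_mul_mono σ e 1 1 hj hi, add_comm j i]
  simp only [map_one, one_mul]

theorem coeff_eq_of_mono_mul_mono_comm (he : IsUnit e) {c d : S} {u v : ℕ}
    (hu : u < m) (hv : v < m)
    (h : petitMul σ m (constF m e) (mono m c u) (mono m d v)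
      = petitMul σ m (constF m e) (mono m d v) (mono m c u)) :
    c * (σ ^ u) d = d * (σ ^ v) c := by
  rw [mono_mul_mono σ e c d hu hv, mono_mul_mono σ e d c hv hu, add_comm v u,
    mono_left_inj (Nat.mod_lt _ (by omega))] at h
  have hwrap : IsUnit (if u + v < m then 1 else (σ ^ (u + v - m)) e) := by
    split_ifs
    exacts [isUnit_one, he.map _]
  exact hwrap.mul_left_injective h

/-- When `σ ^ m = 1` and `σ e = e`, `t ^ m - e` is two-sided and `S_e` is associative: both
bracketings pick up one factor `e` per multiple of `m` in `u + v + w`. -/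
theorem mono_mul_mono_assoc (hσm : σ ^ m = 1) (he : σ e = e) (c d f : S) {u v w : ℕ}
    (hu : u < m) (hv : v < m) (hw : w < m) :
    petitMul σ m (constF m e) (petitMul σ m (constF m e) (mono m c u) (mono m d v)) (mono m f w)
      = petitMul σ m (constF m e) (mono m c u)
          (petitMul σ m (constF m e) (mono m d v) (mono m f w)) := by
  have hfix : ∀ j, (σ ^ j) e = e := fun j => by
    rw [RingAut.coe_pow]; exact Function.iterate_fixed he j
  have hmod : ∀ j, σ ^ (j % m) = σ ^ j := fun j => by
    conv_rhs => rw [← Nat.mod_add_div j m, pow_add, pow_mul, hσm, one_pow, mul_one]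
  have hwrap : ∀ j, j < 2 * m → j % m = if j < m then j else j - m := fun j hj => by
    split_ifs with h
    · exact Nat.mod_eq_of_lt h
    · rw [Nat.mod_eq_sub_mod (by omega), Nat.mod_eq_of_lt (by omega)]
  rw [mono_mul_mono σ e c d hu hv, mono_mul_mono σ e d f hv hw,
    mono_mul_mono σ e _ _ (Nat.mod_lt _ (by omega)) hw,
    mono_mul_mono σ e _ _ hu (Nat.mod_lt _ (by omega))]
  refine mono_congr ?_ (by rw [Nat.mod_add_mod, Nat.add_mod_mod, add_assoc])
  simp only [hfix, hmod, map_mul, apply_ite, map_one]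
  rw [← RingAut.mul_apply, ← pow_add]
  simp only [hwrap (u + v) (by omega), hwrap (v + w) (by omega)]
  split_ifs <;> first | omega | ring

end MonomialRelations

section Homomorphisms

variable [CommRing S] {σ τ : RingAut S} {m : ℕ} {a b : S} {G : (Fin m → S) → (Fin m → S)}

theorem exists_map_mono_eq_mono [Nontrivial S] (hwtp : ∀ x, hwt (G x) = hwt x) {c : S} {i : ℕ}
    (hi : i < m) (hc : c ≠ 0) : ∃ β v, β ≠ 0 ∧ v < m ∧ G (mono m c i) = mono m β v :=
  exists_eq_mono_of_hwt_eq_one ((hwtp _).trans (hwt_mono hi hc))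

theorem map_mono_eq_mul_of_map_mono_one
    (hmul : ∀ x y, G (petitMul σ m (constF m a) x y) = petitMul σ m (constF m b) (G x) (G y))
    (hres : ∀ c, G (mono m c 0) = mono m (τ c) 0) {i v : ℕ} {β : S} (hi : i < m) (hv : v < m)
    (hG : G (mono m 1 i) = mono m β v) (c : S) : G (mono m c i) = mono m (τ c * β) v := by
  have hci : petitMul σ m (constF m a) (mono m c 0) (mono m 1 i) = mono m c i := by
    rw [mono_mul_mono_of_lt σ a c 1 (by omega), zero_add, map_one, mul_one]
  rw [← hci, hmul, hres, hG, mono_mul_mono_of_lt σ b _ _ (by omega), zero_add, pow_zero,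
    RingAut.one_apply]

/-- `t ^ i c = σ ^ i (c) t ^ i` in `S_a` forces the exponent `v` of `G (t ^ i)` to act like `i`. -/
theorem pow_eq_of_map_mono_one (hcomm : ∀ x, τ (σ x) = σ (τ x))
    (hmul : ∀ x y, G (petitMul σ m (constF m a) x y) = petitMul σ m (constF m b) (G x) (G y))
    (hres : ∀ c, G (mono m c 0) = mono m (τ c) 0) {i v : ℕ} {β : S} (hi : i < m) (hv : v < m)
    (hG : G (mono m 1 i) = mono m β v) (hβ : IsUnit β) : σ ^ v = σ ^ i := by
  have hτσ : Commute τ (σ ^ i) := Commute.pow_right (RingEquiv.ext hcomm) i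
  ext x
  have h := hmul (mono m 1 i) (mono m (τ.symm x) 0)
  rw [mono_mul_mono_of_lt σ a 1 _ (by omega), one_mul, add_zero,
    map_mono_eq_mul_of_map_mono_one hmul hres hi hv hG, hG, hres,
    mono_mul_mono_of_lt σ b _ _ (by omega), add_zero, mono_left_inj hv,
    ← RingAut.mul_apply, hτσ.eq, RingAut.mul_apply, RingEquiv.apply_symm_apply] at h
  exact hβ.mul_left_cancel (h.symm.trans (mul_comm _ _))

theorem isUnit_of_map_mono_one_one [Nontrivial S]
    (hmul : ∀ x y, G (petitMul σ m (constF m a) x y) = petitMul σ m (constF m b) (G x) (G y))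
    (hres : ∀ c, G (mono m c 0) = mono m (τ c) 0) (hwtp : ∀ x, hwt (G x) = hwt x)
    (ha : IsUnit a) (hm : 2 ≤ m) {α : S} {k : ℕ} (hk : k < m)
    (hG : G (mono m 1 1) = mono m α k) : IsUnit α := by
  obtain ⟨β, v, -, hv, hGβ⟩ := exists_map_mono_eq_mono hwtp (by omega : m - 1 < m) one_ne_zero
  have h := hmul (mono m 1 1) (mono m 1 (m - 1))
  rw [mono_mul_mono_of_le σ a 1 1 (by omega) (by omega) (by omega),
    show 1 + (m - 1) - m = 0 by omega, pow_zero, RingAut.one_apply, map_one, one_mul, one_mul,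
    hres, hG, hGβ, mono_mul_mono σ b α β hk hv] at h
  have hτa := (mono_inj (by omega) (ha.map τ).ne_zero h).1
  rw [mul_assoc] at hτa
  exact isUnit_of_mul_isUnit_left (hτa ▸ ha.map τ)

theorem coeff_comm_of_map_mono_one
    (hmul : ∀ x y, G (petitMul σ m (constF m a) x y) = petitMul σ m (constF m b) (G x) (G y))
    (hb : IsUnit b) (hm : 1 < m) {α c : S} {i k w : ℕ} (hi : i < m) (hk : k < m) (hw : w < m)
    (hG : G (mono m 1 1) = mono m α k) (hGi : G (mono m 1 i) = mono m c w) :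
    c * (σ ^ w) α = α * (σ ^ k) c := by
  have h := congrArg G (mono_one_mul_mono_one_comm σ a hi hm)
  rw [hmul, hmul, hG, hGi] at h
  exact coeff_eq_of_mono_mul_mono_comm σ b hb hw hk h

theorem exists_map_mono_one_of_mul_lt
    (hmul : ∀ x y, G (petitMul σ m (constF m a) x y) = petitMul σ m (constF m b) (G x) (G y))
    (hres : ∀ c, G (mono m c 0) = mono m (τ c) 0) {α : S} {k : ℕ} (hk : 0 < k)
    (hG : G (mono m 1 1) = mono m α k) (hα : IsUnit α) :
    ∀ j, j * k < m → ∃ c, IsUnit c ∧ G (mono m 1 j) = mono m c (j * k)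
  | 0, _ => ⟨1, isUnit_one, by rw [hres, map_one, zero_mul]⟩
  | j + 1, hj => by
    have hjk : j ≤ j * k := Nat.le_mul_of_pos_right j hk
    obtain ⟨c, hc, hGj⟩ := exists_map_mono_one_of_mul_lt hmul hres hk hG hα j (by nlinarith)
    refine ⟨α * (σ ^ k) c, hα.mul (hc.map _), ?_⟩
    have h := hmul (mono m 1 1) (mono m 1 j)
    rw [mono_mul_mono_of_lt σ a 1 1 (by nlinarith), map_one, one_mul, add_comm 1 j, hG, hGj,
      mono_mul_mono_of_lt σ b α c (by nlinarith)] at h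
    rw [h, add_mul, one_mul, add_comm]

end Homomorphisms

section HigherDegree

variable [CommRing S] {σ τ : RingAut S} {m : ℕ} {a b : S} {G : (Fin m → S) → (Fin m → S)}

theorem exists_map_mono_one_first_wrap
    (hmul : ∀ x y, G (petitMul σ m (constF m a) x y) = petitMul σ m (constF m b) (G x) (G y))
    (hres : ∀ c, G (mono m c 0) = mono m (τ c) 0) {α : S} {k : ℕ} (hk : 2 ≤ k) (hkm : k < m)
    (hG : G (mono m 1 1) = mono m α k) (hα : IsUnit α) :
    ∃ j c w, j + 1 < m ∧ j * k < m ∧ w < m ∧ w + m = (j + 1) * k ∧ IsUnit c ∧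
      G (mono m 1 j) = mono m c (j * k) ∧
      G (mono m 1 (j + 1)) = mono m (α * (σ ^ k) c * (σ ^ w) b) w := by
  have hk0 : 0 < k := by omega
  have hjk : (m - 1) / k * k ≤ m - 1 := Nat.div_mul_le_self _ _
  have hjk' : m - 1 < ((m - 1) / k + 1) * k := mul_comm k _ ▸ Nat.lt_mul_div_succ _ hk0
  generalize (m - 1) / k = j at hjk hjk'
  have h2j : 2 * j ≤ j * k := by nlinarith
  have hexp : (j + 1) * k = k + j * k := by ring
  obtain ⟨c, hc, hGj⟩ := exists_map_mono_one_of_mul_lt hmul hres hk0 hG hα j (by omega)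
  refine ⟨j, c, k + j * k - m, by omega, by omega, by omega, by omega, hc, hGj, ?_⟩
  have h := hmul (mono m 1 1) (mono m 1 j)
  rwa [mono_mul_mono_of_lt σ a 1 1 (by omega), map_one, one_mul, add_comm 1 j, hG, hGj,
    mono_mul_mono_of_le σ b α c hkm (by omega) (by omega)] at h

theorem pow_eq_one_of_map_mono_one_one (hcomm : ∀ x, τ (σ x) = σ (τ x))
    (hmul : ∀ x y, G (petitMul σ m (constF m a) x y) = petitMul σ m (constF m b) (G x) (G y))
    (hres : ∀ c, G (mono m c 0) = mono m (τ c) 0) (hb : IsUnit b) {α : S} {k : ℕ}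
    (hk : 2 ≤ k) (hkm : k < m) (hG : G (mono m 1 1) = mono m α k) (hα : IsUnit α)
    (hσk : σ ^ k = σ) : σ ^ m = 1 := by
  obtain ⟨j, c, w, hj, -, hw, hwm, hc, -, hGj⟩ :=
    exists_map_mono_one_first_wrap hmul hres hk hkm hG hα
  have hσw := pow_eq_of_map_mono_one hcomm hmul hres hj hw hGj
    ((hα.mul (hc.map _)).mul (hb.map _))
  refine mul_eq_left.mp (?_ : σ ^ w * σ ^ m = σ ^ w)
  rw [← pow_add, hwm, pow_mul', hσk, hσw]

/-- The commutation relation `c σ ^ j (α) = α σ (c)` of `G (t ^ j) = c t ^ {jk}` with `G t`,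
propagated across the first wrap, leaves `σ ^ w (b) = σ ^ {w + 1} (b)`. -/
theorem apply_eq_self_of_map_mono_one_one (hcomm : ∀ x, τ (σ x) = σ (τ x))
    (hmul : ∀ x y, G (petitMul σ m (constF m a) x y) = petitMul σ m (constF m b) (G x) (G y))
    (hres : ∀ c, G (mono m c 0) = mono m (τ c) 0) (hb : IsUnit b) {α : S} {k : ℕ}
    (hk : 2 ≤ k) (hkm : k < m) (hG : G (mono m 1 1) = mono m α k) (hα : IsUnit α)
    (hσk : σ ^ k = σ) : σ b = b := by
  obtain ⟨j, c, w, hj, hjk, hw, -, hc, hGj, hGj1⟩ :=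
    exists_map_mono_one_first_wrap hmul hres hk hkm hG hα
  have hσw := pow_eq_of_map_mono_one hcomm hmul hres hj hw hGj1
    ((hα.mul (hc.map _)).mul (hb.map _))
  have hσ_succ : ∀ x, σ ((σ ^ j) x) = (σ ^ (j + 1)) x := fun x => by
    rw [pow_succ', RingAut.mul_apply]
  have hdj := coeff_comm_of_map_mono_one hmul hb (by omega) (by omega) hkm hjk hG hGj
  have hdj1 := coeff_comm_of_map_mono_one hmul hb (by omega) hj hkm hw hG hGj1
  rw [pow_mul', hσk] at hdj
  rw [hσk, hσw, map_mul, map_mul] at hdj1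
  have hσdj := congrArg σ hdj
  rw [map_mul, map_mul, hσ_succ] at hσdj
  have hX : IsUnit (α * σ α * σ (σ c)) := (hα.mul (hα.map σ)).mul ((hc.map σ).map σ)
  have hfix : (σ ^ (j + 1)) b = (σ ^ (j + 1)) (σ b) := by
    rw [← RingAut.mul_apply, ← (Commute.self_pow σ (j + 1)).eq, RingAut.mul_apply]
    exact hX.mul_left_cancel (by linear_combination hdj1 - α * (σ ^ (j + 1)) b * hσdj)
  exact ((σ ^ (j + 1)).injective hfix).symm

theorem apply_eq_self_of_mono_mul_mono_assoc [Nontrivial S]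
    (hmul : ∀ x y, G (petitMul σ m (constF m a) x y) = petitMul σ m (constF m b) (G x) (G y))
    (hres : ∀ c, G (mono m c 0) = mono m (τ c) 0) (hwtp : ∀ x, hwt (G x) = hwt x)
    (hσm : σ ^ m = 1) (hσb : σ b = b) (hm : 2 < m) {α : S} {k : ℕ} (hkm : k < m)
    (hG : G (mono m 1 1) = mono m α k) (hα : IsUnit α) : σ a = a := by
  obtain ⟨β, v, -, hv, hGβ⟩ := exists_map_mono_eq_mono hwtp (by omega : m - 1 < m) one_ne_zero
  have hleft : petitMul σ m (constF m a)
      (petitMul σ m (constF m a) (mono m 1 (m - 1)) (mono m 1 1)) (mono m 1 1) = mono m a 1 := by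
    rw [mono_mul_mono_of_le σ a 1 1 (by omega) (by omega) (by omega),
      show m - 1 + 1 - m = 0 by omega, mono_mul_mono_of_lt σ a _ 1 (by omega)]
    simp
  have hright : petitMul σ m (constF m a) (mono m 1 (m - 1))
      (petitMul σ m (constF m a) (mono m 1 1) (mono m 1 1)) = mono m (σ a) 1 := by
    rw [mono_mul_mono_of_lt σ a 1 1 (by omega),
      mono_mul_mono_of_le σ a 1 _ (by omega) (by omega) (by omega),
      show m - 1 + (1 + 1) - m = 1 by omega]
    simp
  have h := congrArg G hleft.symm
  rw [hmul, hmul, hGβ, hG, mono_mul_mono_assoc σ b hσm hσb _ _ _ hv hkm hkm, ← hG, ← hGβ,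
    ← hmul, ← hmul, hright, map_mono_eq_mul_of_map_mono_one hmul hres (by omega) hkm hG,
    map_mono_eq_mul_of_map_mono_one hmul hres (by omega) hkm hG, mono_left_inj hkm] at h
  exact τ.injective (hα.mul_right_cancel h.symm)

end HigherDegree

end PetitFormal

open PetitFormal

theorem stmt9_general {S : Type*} [CommRing S] (σ : RingAut S) (n : ℕ)
    (hn : orderOf σ = n) (m : ℕ) (a b : Sˣ)
    (hproper : ¬ n ∣ m ∨ σ (a : S) ≠ (a : S) ∨ σ (b : S) ≠ (b : S))
    (G : (Fin m → S) → (Fin m → S)) (τ : RingAut S)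
    (hcomm : ∀ x, τ (σ x) = σ (τ x))
    (hres : ∀ c : S, G (mono m c 0) = mono m (τ c) 0)
    (hhom : IsPetitHom σ m (constF m (a : S)) (constF m (b : S)) G)
    (hwtp : ∀ x, hwt (G x) = hwt x) :
    ∃ α : S, α ∈ nonZeroDivisors S ∧ G (mono m 1 1) = mono m α 1 := by
  rcases subsingleton_or_nontrivial S with hS | hS
  · exact ⟨1, one_mem _, Subsingleton.elim _ _⟩
  obtain ⟨hadd, hmul, -⟩ := hhom
  by_cases hm : m ≤ 1
  · have hG0 : G 0 = 0 := by simpa using hadd 0 0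
    exact ⟨1, one_mem _, by rw [mono_eq_zero 1 (by omega), hG0]⟩
  have hnassoc : ¬ (σ ^ m = 1 ∧ σ a = a ∧ σ b = b) := by
    rintro ⟨hσm, hσa, hσb⟩
    rcases hproper with h | h | h
    exacts [h (hn ▸ orderOf_dvd_of_pow_eq_one hσm), h hσa, h hσb]
  obtain ⟨α, k, -, hk, hG⟩ := exists_map_mono_eq_mono hwtp (by omega : 1 < m) one_ne_zero
  have hα := isUnit_of_map_mono_one_one hmul hres hwtp a.isUnit (by omega) hk hG
  have hσk : σ ^ k = σ := by
    simpa using pow_eq_of_map_mono_one hcomm hmul hres (by omega) hk hG hα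
  refine ⟨α, hα.mem_nonZeroDivisors, ?_⟩
  obtain rfl | rfl | hk2 : k = 0 ∨ k = 1 ∨ 2 ≤ k := by omega
  · rw [pow_zero] at hσk
    exact absurd ⟨by rw [← hσk, one_pow], by rw [← hσk]; rfl, by rw [← hσk]; rfl⟩ hnassoc
  · exact hG
  · have hσm := pow_eq_one_of_map_mono_one_one hcomm hmul hres b.isUnit hk2 hk hG hα hσk
    have hσb := apply_eq_self_of_map_mono_one_one hcomm hmul hres b.isUnit hk2 hk hG hα hσk
    exact absurd ⟨hσm, apply_eq_self_of_mono_mul_mono_assoc hmul hres hwtp hσm hσb (by omega)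
      hk hG hα, hσb⟩ hnassoc

/-- Corollary `C:onlyweightone`: if `n ∤ m`, or one of `a`, `b` is not fixed by
`σ` (proper nonassociativity), then every Hamming-weight-preserving nonzero
homomorphism `G : S_a → S_b` whose restriction to `S` is an automorphism `τ`
commuting with `σ` is monomial of degree one: `G(t) = α t` with `α` a
non-zero-divisor. -/
theorem stmt9 {S : Type*} [CommRing S] (σ : RingAut S) (n : ℕ)
    (hn : orderOf σ = n) (hn0 : 0 < n) (m : ℕ) (hm : 0 < m) (a b : Sˣ)
    (hproper : ¬ n ∣ m ∨ σ (a : S) ≠ (a : S) ∨ σ (b : S) ≠ (b : S))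
    (G : (Fin m → S) → (Fin m → S)) (τ : RingAut S)
    (hcomm : ∀ x, τ (σ x) = σ (τ x))
    (hres : ∀ c : S, G (mono m c 0) = mono m (τ c) 0)
    (hhom : IsPetitHom σ m (constF m (a : S)) (constF m (b : S)) G)
    (hwtp : ∀ x, hwt (G x) = hwt x) :
    ∃ α : S, α ∈ nonZeroDivisors S ∧ G (mono m 1 1) = mono m α 1 :=
  stmt9_general σ n hn m a b hproper G τ hcomm hres hhom hwtp
end
end
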